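/- arXiv:2102.07285 — 3 statements merged into one kernel-verified Lean document; each statement's English description precedes it below -/
import Mathlib

section
/- Let E ⊆ ℂ be a number field with E ⊄ ℝ and E closed under complex conjugation. Then E ∩ S¹ (elements of E of absolute value 1) is dense in the unit circle S¹. -/
/-!
Conjugation-stability and `E ⊄ ℝ` give a nonzero purely imaginary `u ∈ E` (namely `α - conj α`).
The Cayley-type transform `x ↦ (x + u) / (x - u)` is a continuous map from `ℝ` onto the unit
circle minus `1`, and it sends `ℚ` into `E`. Density of `ℚ` in `ℝ` then gives density of `E ∩ S¹`.
-/

open Complex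

namespace Complex

section Cayley

variable {u : ℂ}

lemma ofReal_sub_ne_zero_of_im_ne_zero (him : u.im ≠ 0) (x : ℝ) : (x : ℂ) - u ≠ 0 := by
  intro h
  exact him (by simpa using congrArg im h)

lemma continuous_ofReal_add_div_ofReal_sub (him : u.im ≠ 0) :
    Continuous fun x : ℝ => ((x : ℂ) + u) / ((x : ℂ) - u) :=
  (continuous_ofReal.add continuous_const).div (continuous_ofReal.sub continuous_const)
    (ofReal_sub_ne_zero_of_im_ne_zero him)

lemma norm_ofReal_add_div_ofReal_sub (hre : u.re = 0) (him : u.im ≠ 0) (x : ℝ) :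
    ‖((x : ℂ) + u) / ((x : ℂ) - u)‖ = 1 := by
  have hconj : (x : ℂ) - u = starRingEnd ℂ ((x : ℂ) + u) := by
    apply Complex.ext <;> simp [hre]
  rw [norm_div, div_eq_one_iff_eq (norm_ne_zero_iff.2 (ofReal_sub_ne_zero_of_im_ne_zero him x)),
    hconj, norm_conj]

lemma exists_ofReal_add_div_ofReal_sub_eq (hre : u.re = 0) (him : u.im ≠ 0) {z : ℂ}
    (hz : ‖z‖ = 1) (hz1 : z ≠ 1) : ∃ x : ℝ, ((x : ℂ) + u) / ((x : ℂ) - u) = z := by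
  have hz0 : z ≠ 0 := by rintro rfl; simp at hz
  have hsub : z - 1 ≠ 0 := sub_ne_zero.2 hz1
  have hu0 : u ≠ 0 := fun h => him (by simp [h])
  have hconj_u : starRingEnd ℂ u = -u := by apply Complex.ext <;> simp [hre]
  have hconj_z : starRingEnd ℂ z = z⁻¹ := by
    rw [inv_def, normSq_eq_norm_sq, hz]
    simp
  -- solving `(x + u) / (x - u) = z` for `x`
  set w : ℂ := u * (1 + z) / (z - 1) with hw
  have hw_real : starRingEnd ℂ w = w := by
    have hinv : z⁻¹ - 1 ≠ 0 := sub_ne_zero.2 (fun h => hz1 (inv_eq_one.1 h))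
    rw [hw, map_div₀, map_mul, hconj_u, map_sub, map_add, map_one, hconj_z,
      div_eq_div_iff hinv hsub]
    field_simp
    ring
  refine ⟨w.re, ?_⟩
  rw [conj_eq_iff_re.1 hw_real]
  have hwu : w - u = 2 * u / (z - 1) := by
    rw [hw]; field_simp; ring
  rw [div_eq_iff (by rw [hwu]; exact div_ne_zero (by simpa using hu0) hsub), hw]
  field_simp
  ring

end Cayley

lemma exists_mem_re_eq_zero_im_ne_zero {S : Type*} [SetLike S ℂ] [AddSubgroupClass S ℂ] (E : S)
    (hER : ¬ (E : Set ℂ) ⊆ Set.range ofReal) (hconj : ∀ z ∈ E, starRingEnd ℂ z ∈ E) :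
    ∃ u ∈ E, u.re = 0 ∧ u.im ≠ 0 := by
  obtain ⟨α, hαE, hαR⟩ := Set.not_subset.1 hER
  have him : α.im ≠ 0 := fun h => hαR ⟨α.re, Complex.ext (by simp) (by simp [h])⟩
  refine ⟨α - starRingEnd ℂ α, sub_mem hαE (hconj α hαE), by simp, ?_⟩
  simpa [← two_mul] using him

lemma subset_closure_inter_unitSphere {K : Type*} [SetLike K ℂ] [SubfieldClass K ℂ] (E : K)
    {u : ℂ} (huE : u ∈ E) (hre : u.re = 0) (him : u.im ≠ 0) {z : ℂ} (hz : ‖z‖ = 1) :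
    z ∈ closure {w : ℂ | w ∈ E ∧ ‖w‖ = 1} := by
  rcases eq_or_ne z 1 with rfl | hz1
  · exact subset_closure ⟨one_mem E, norm_one⟩
  obtain ⟨x, rfl⟩ := exists_ofReal_add_div_ofReal_sub_eq hre him hz hz1
  have hmaps : Set.MapsTo (fun x : ℝ => ((x : ℂ) + u) / ((x : ℂ) - u))
      (Set.range ((↑) : ℚ → ℝ)) {w : ℂ | w ∈ E ∧ ‖w‖ = 1} := by
    rintro _ ⟨q, rfl⟩
    have hq : ((q : ℝ) : ℂ) ∈ E := by exact_mod_cast SubfieldClass.ratCast_mem E q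
    exact ⟨div_mem (add_mem hq huE) (sub_mem hq huE), norm_ofReal_add_div_ofReal_sub hre him q⟩
  exact hmaps.closure (continuous_ofReal_add_div_ofReal_sub him) (Rat.denseRange_cast x)

end Complex

theorem stmt2_general (E : IntermediateField ℚ ℂ)
    (hER : ¬ (E : Set ℂ) ⊆ Set.range Complex.ofReal)
    (hconj : ∀ z ∈ E, (starRingEnd ℂ) z ∈ E) :
    ∀ z : ℂ, ‖z‖ = 1 →
      z ∈ closure {w : ℂ | w ∈ E ∧ ‖w‖ = 1} := by
  obtain ⟨u, huE, hre, him⟩ := Complex.exists_mem_re_eq_zero_im_ne_zero E hER hconj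
  exact fun z hz => Complex.subset_closure_inter_unitSphere E huE hre him hz

/-- If `E ⊆ ℂ` is a number field, not contained in `ℝ`, and stable under complex
conjugation, then the elements of `E` of absolute value `1` are dense in the unit circle. -/
theorem stmt2 (E : IntermediateField ℚ ℂ) [FiniteDimensional ℚ E]
    (hER : ¬ (E : Set ℂ) ⊆ Set.range Complex.ofReal)
    (hconj : ∀ z ∈ E, (starRingEnd ℂ) z ∈ E) :
    ∀ z : ℂ, ‖z‖ = 1 →
      z ∈ closure {w : ℂ | w ∈ E ∧ ‖w‖ = 1} :=
  stmt2_general E hER hconj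
end

section
/- Let σ' = aσ + b·conj(σ) + ℓ satisfy the conic equation, and let ℓ' ∈ T ⊕ ℚℓ be orthogonal to σ'. If additionally (ℓ.ℓ') = 0 (i.e. ℓ' ∈ T) and (σ.ℓ') = 1, then b = −a, a is real with 2a²(σ.conj σ) = d, and ℓ = Re(σ') = (σ' + conj σ')/2. -/
/-- If `σ' = aσ + b·conjσ + ℓ` lies on the conic and `ℓ'` is orthogonal to `σ'` with
`(ℓ.ℓ') = 0` and `(σ.ℓ') = (conjσ.ℓ') = 1`, then `b = -a`, `a` is real with
`2a²(σ.conjσ) = d`, and `ℓ = (σ' + conj σ')/2`. -/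
theorem stmt8 {V : Type*} [AddCommGroup V] [Module ℂ V]
    (B : V →ₗ[ℂ] V →ₗ[ℂ] ℂ) (hB : ∀ x y, B x y = B y x)
    (σ σb ℓ : V) (s d : ℝ) (hs : 0 < s) (hd : 0 < d)
    (h1 : B σ σ = 0) (h2 : B σb σb = 0) (h3 : B σ σb = (s : ℂ))
    (h4 : B σ ℓ = 0) (h5 : B σb ℓ = 0) (h6 : B ℓ ℓ = (d : ℂ))
    (a b : ℂ) (hconic : 2 * a * b * (s : ℂ) + (d : ℂ) = 0)
    (ℓ' : V) (ho : B (a • σ + b • σb + ℓ) ℓ' = 0)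
    (hlT : B ℓ ℓ' = 0) (hσl : B σ ℓ' = 1) (hσbl : B σb ℓ' = 1) :
    b = -a ∧ a.im = 0 ∧ 2 * a ^ 2 * (s : ℂ) = (d : ℂ) ∧
    ℓ = (2 : ℂ)⁻¹ • ((a • σ + b • σb + ℓ) +
        ((starRingEnd ℂ) b • σ + (starRingEnd ℂ) a • σb + ℓ)) := by
  have hab : b = -a := by
    have h := ho
    simp only [map_add, map_smul, LinearMap.add_apply, LinearMap.smul_apply,
      hσl, hσbl, hlT, smul_eq_mul, mul_one, add_zero] at h
    linear_combination h
  subst hab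
  have hsq : 2 * a ^ 2 * (s : ℂ) = (d : ℂ) := by linear_combination -hconic
  have haim : a.im = 0 := by
    have hre : 2 * (a.re * a.re - a.im * a.im) * s = d := by
      have := congrArg Complex.re hsq
      simp [Complex.mul_re, Complex.mul_im, pow_two] at this
      nlinarith [this]
    have him : (a.re * a.im) * s = 0 := by
      have := congrArg Complex.im hsq
      simp [Complex.mul_re, Complex.mul_im, pow_two] at this
      rcases this with h | h
      · nlinarith [h]
      · exact absurd h (ne_of_gt hs)
    have h0 : a.re * a.im = 0 := by
      rcases mul_eq_zero.mp him with h | h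
      · exact h
      · exact absurd h (ne_of_gt hs)
    rcases mul_eq_zero.mp h0 with h | h
    · exfalso; rw [h] at hre; nlinarith [sq_nonneg a.im, mul_pos (mul_pos (mul_pos two_pos (mul_pos (mul_self_pos.mpr (by intro hh; apply hd.ne'; nlinarith : a.im ≠ 0)) hs)) one_pos) one_pos]
    · exact h
  refine ⟨rfl, haim, hsq, ?_⟩
  have hastar : (starRingEnd ℂ) a = a := Complex.conj_eq_iff_im.mpr haim
  rw [map_neg, hastar]
  have : (a • σ + -a • σb + ℓ) + (-a • σ + a • σb + ℓ) = (2:ℂ) • ℓ := by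
    module
  rw [this, smul_smul]
  norm_num
end

section
/- Let ℓ' be a nonzero vector in T ⊕ ℚℓ with ℓ' ∉ ℚℓ. The set of points on the conic {[σ'] ∈ ℙ(ℂσ ⊕ ℂ·conj σ ⊕ ℂℓ) : (σ'.σ') = 0} orthogonal to ℓ' consists of exactly two distinct points, and they are exchanged by complex conjugation: if z = [aσ + b·conj σ + ℓ] is one of them, the other is [conj(b)σ + conj(a)·conj σ + ℓ]. -/
/-!
Writing `u = a p` and `v = b conj p`, the two equations say that `u + v = -q` and
`u v = -d |p|² / (2 s)`. Since `q` is real and the product is negative, `u` and `v` are the two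
distinct real roots `t₁ ≠ t₂` of `X² + q X - d |p|² / (2 s)`, in either order. Conjugating
`(t₁ / p, t₂ / conj p)` gives `(t₂ / p, t₁ / conj p)`, which is the other ordering.
-/

open ComplexConjugate

theorem add_eq_add_and_mul_eq_mul_iff {R : Type*} [CommRing R] [IsDomain R] {u v x y : R} :
    u + v = x + y ∧ u * v = x * y ↔ u = x ∧ v = y ∨ u = y ∧ v = x := by
  constructor
  · rintro ⟨hsum, hprod⟩
    have hfactor : (u - x) * (u - y) = 0 := by linear_combination u * hsum - hprod
    rcases mul_eq_zero.1 hfactor with hx | hy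
    · exact .inl ⟨sub_eq_zero.1 hx, by linear_combination hsum - hx⟩
    · exact .inr ⟨sub_eq_zero.1 hy, by linear_combination hsum - hy⟩
  · rintro (⟨rfl, rfl⟩ | ⟨rfl, rfl⟩)
    exacts [⟨rfl, rfl⟩, ⟨add_comm _ _, mul_comm _ _⟩]

theorem Real.exists_ne_add_eq_mul_eq_of_neg (m : ℝ) {c : ℝ} (hc : c < 0) :
    ∃ t₁ t₂ : ℝ, t₁ ≠ t₂ ∧ t₁ + t₂ = m ∧ t₁ * t₂ = c := by
  have hdisc : 0 < m ^ 2 - 4 * c := by nlinarith [sq_nonneg m]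
  set r := √(m ^ 2 - 4 * c)
  have hr : 0 < r := Real.sqrt_pos.2 hdisc
  have hr2 : r ^ 2 = m ^ 2 - 4 * c := Real.sq_sqrt hdisc.le
  refine ⟨(m + r) / 2, (m - r) / 2, ?_, by ring, by linear_combination -hr2 / 4⟩
  intro h
  linarith

theorem conic_inter_line_iff {K : Type*} [Field K] {a b p p' q s d : K}
    (hs : 2 * s ≠ 0) (hpp' : p * p' ≠ 0) :
    2 * a * b * s + d = 0 ∧ a * p + b * p' + q = 0 ↔
      a * p + b * p' = -q ∧ (a * p) * (b * p') = -(d * (p * p')) / (2 * s) := by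
  have hprod : (a * p) * (b * p') = -(d * (p * p')) / (2 * s) ↔ 2 * a * b * s + d = 0 := by
    rw [eq_div_iff hs]
    constructor
    · intro h
      exact (mul_eq_zero.1 (by linear_combination h)).resolve_left hpp'
    · intro h
      linear_combination (p * p') * h
  rw [hprod, and_comm, ← eq_neg_iff_add_eq_zero]

/-- For `ℓ' ∈ T ⊕ ℚℓ` nonzero and not a multiple of `ℓ` (encoded by its periods
`p = (σ.ℓ') ≠ 0`, `(conjσ.ℓ') = conj p`, and real `q = (ℓ.ℓ')`), the points
`[aσ + b·conjσ + ℓ]` of the conic orthogonal to `ℓ'` form exactly a pair of two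
distinct points exchanged by conjugation `(a,b) ↦ (conj b, conj a)`. -/
theorem stmt15 (s d : ℝ) (hs : 0 < s) (hd : 0 < d)
    (p q : ℂ) (hp : p ≠ 0) (hq : q.im = 0) :
    ∃ a b : ℂ,
      (a, b) ≠ ((starRingEnd ℂ) b, (starRingEnd ℂ) a) ∧
      {x : ℂ × ℂ | 2 * x.1 * x.2 * (s : ℂ) + (d : ℂ) = 0 ∧
          x.1 * p + x.2 * (starRingEnd ℂ) p + q = 0}
        = {(a, b), ((starRingEnd ℂ) b, (starRingEnd ℂ) a)} := by
  have hp' : conj p ≠ 0 := by simpa using hp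
  have hs2 : (2 * s : ℂ) ≠ 0 := by exact_mod_cast (by positivity : 2 * s ≠ 0)
  have hneg : -(d * Complex.normSq p) / (2 * s) < 0 :=
    div_neg_of_neg_of_pos (neg_neg_of_pos (mul_pos hd (Complex.normSq_pos.2 hp))) (by positivity)
  obtain ⟨t₁, t₂, hne, hsum, hprod⟩ := Real.exists_ne_add_eq_mul_eq_of_neg (-q.re) hneg
  have hqre : (q.re : ℂ) = q := Complex.ext rfl (by simp [hq])
  have hsumℂ : (t₁ + t₂ : ℂ) = -q := by
    rw [← hqre]; exact_mod_cast hsum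
  have hprodℂ : (t₁ * t₂ : ℂ) = -(d * (p * conj p)) / (2 * s) := by
    rw [Complex.mul_conj]; exact_mod_cast hprod
  refine ⟨t₁ / p, t₂ / conj p, ?_, ?_⟩
  · rw [Ne, Prod.mk.injEq, map_div₀, Complex.conj_ofReal, Complex.conj_conj,
      div_left_inj' hp]
    exact fun h => hne (by exact_mod_cast h.1)
  · ext ⟨a, b⟩
    simp only [Set.mem_ofPred_eq, Set.mem_insert_iff, Set.mem_singleton_iff, Prod.mk.injEq,
      map_div₀, Complex.conj_ofReal, Complex.conj_conj]
    rw [conic_inter_line_iff hs2 (mul_ne_zero hp hp'), ← hsumℂ, ← hprodℂ,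
      add_eq_add_and_mul_eq_mul_iff, ← eq_div_iff hp, ← eq_div_iff hp', ← eq_div_iff hp,
      ← eq_div_iff hp']
end
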